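/- Let L be a finite lattice whose height equals the number of its atoms. Then L is isomorphic to the lattice of flats of some boolean representable finite simplicial complex if and only if L is isomorphic to the lattice (2^{At(L)}, ⊆) of all subsets of At(L) ordered by inclusion. -/

import Mathlib

universe u v

/-- `F ⊆ V` is a flat of the simplicial complex `(V, H)`: for every `I ∈ H` with
`I ⊆ F` and every `p ∈ V \ F`, `I ∪ {p} ∈ H`. -/
def IsCFlat {α : Type u} (V : Set α) (H : Set (Set α)) (F : Set α) : Prop :=
  F ⊆ V ∧ ∀ I ∈ H, I ⊆ F → ∀ p ∈ V \ F, insert p I ∈ H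

/-- `(V, H)` is a finite simplicial complex: `V` is finite and nonempty, and
`H ⊆ 2^V` is nonempty and closed under taking subsets. -/
def IsCpx {α : Type u} (V : Set α) (H : Set (Set α)) : Prop :=
  V.Finite ∧ V.Nonempty ∧ H.Nonempty ∧ (∀ X ∈ H, X ⊆ V) ∧ ∀ X ∈ H, ∀ Y ⊆ X, Y ∈ H

/-- `X` is a transversal of the successive differences for some chain
`F 0 ⊂ F 1 ⊂ … ⊂ F k` of flats of `(V, H)`: `X` admits an enumeration
`x 0, …, x (k-1)` with `x i ∈ F (i+1) \ F i`. -/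
def TransvSD {α : Type u} (V : Set α) (H : Set (Set α)) (X : Set α) : Prop :=
  ∃ (k : ℕ) (F : Fin (k + 1) → Set α) (x : Fin k → α),
    (∀ i, IsCFlat V H (F i)) ∧ StrictMono F ∧
    Function.Injective x ∧ X = Set.range x ∧
    ∀ i : Fin k, x i ∈ F i.succ \ F i.castSucc

/-- `(V, H)` is boolean representable: every `X ∈ H` is a transversal of the
successive differences for some chain of flats of `(V, H)`. -/
def BoolRep {α : Type u} (V : Set α) (H : Set (Set α)) : Prop :=
  ∀ X ∈ H, TransvSD V H X

/-- The height of `L` is `n`: there is a chain `x_0 < … < x_n` and no longer chain. -/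
def hasHeight (L : Type u) [Preorder L] (n : ℕ) : Prop :=
  (∃ c : Fin (n + 1) → L, StrictMono c) ∧
    ∀ (m : ℕ) (c : Fin (m + 1) → L), StrictMono c → m ≤ n

/-!
In a boolean representable complex the points of a face lie outside the bottom flat and have
pairwise distinct closures, and the closure of a point outside the bottom flat is an atom of the
lattice of flats. A chain of flats of length `n` provides points `x i` with `n` distinct closures;
when there are only `n` atoms, every point outside the bottom flat has the closure of some `x i`.
As partial transversals of a chain of flats are faces, every set of points outside the bottom flat
with distinct closures is then a face. Hence every union of closure classes with the bottom flat
is a flat, and `T ↦ {q | cl q = cl (x i) → i ∈ T}` identifies `2^n` with the flats.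
Conversely, the boolean lattice on `A` is the lattice of flats of the complex `(A ∪ {b}, 2^A)`.
-/

open Set Function

variable {α : Type u} {V : Set α} {H : Set (Set α)}

abbrev CFlats (V : Set α) (H : Set (Set α)) : Type u := {F : Set α // IsCFlat V H F}

def cflatClosure (V : Set α) (H : Set (Set α)) (Z : Set α) : Set α :=
  ⋂₀ {F | IsCFlat V H F ∧ Z ⊆ F}

def cflatBot (V : Set α) (H : Set (Set α)) : Set α := cflatClosure V H ∅

theorem isCFlat_self : IsCFlat V H V :=
  ⟨subset_rfl, fun _ _ _ _ hp => absurd hp.1 hp.2⟩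

theorem subset_cflatClosure (Z : Set α) : Z ⊆ cflatClosure V H Z :=
  fun _ hz _ hF => hF.2 hz

theorem cflatClosure_subset {Z F : Set α} (hF : IsCFlat V H F) (hZF : Z ⊆ F) :
    cflatClosure V H Z ⊆ F :=
  sInter_subset_of_mem ⟨hF, hZF⟩

theorem isCFlat_cflatClosure {Z : Set α} (hZ : Z ⊆ V) : IsCFlat V H (cflatClosure V H Z) := by
  refine ⟨cflatClosure_subset isCFlat_self hZ, fun I hI hIZ p hp => ?_⟩
  obtain ⟨F, hF, hZF, hpF⟩ : ∃ F, IsCFlat V H F ∧ Z ⊆ F ∧ p ∉ F := by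
    simpa [cflatClosure] using hp.2
  exact hF.2 I hI (hIZ.trans (cflatClosure_subset hF hZF)) p ⟨hp.1, hpF⟩

theorem isCFlat_cflatBot : IsCFlat V H (cflatBot V H) :=
  isCFlat_cflatClosure (empty_subset V)

theorem cflatBot_subset {F : Set α} (hF : IsCFlat V H F) : cflatBot V H ⊆ F :=
  cflatClosure_subset hF (empty_subset F)

instance : OrderBot (CFlats V H) where
  bot := ⟨cflatBot V H, isCFlat_cflatBot⟩
  bot_le F := cflatBot_subset F.2

theorem mem_cflatClosure_singleton (p : α) : p ∈ cflatClosure V H {p} :=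
  subset_cflatClosure {p} rfl

theorem mem_iff_cflatClosure_singleton_subset {F : Set α} (hF : IsCFlat V H F) {p : α} :
    p ∈ F ↔ cflatClosure V H {p} ⊆ F :=
  ⟨fun hp => cflatClosure_subset hF (singleton_subset_iff.2 hp),
    fun h => h (mem_cflatClosure_singleton p)⟩

theorem mem_iff_of_cflatClosure_eq {F : Set α} (hF : IsCFlat V H F) {p q : α}
    (h : cflatClosure V H {p} = cflatClosure V H {q}) : p ∈ F ↔ q ∈ F := by
  rw [mem_iff_cflatClosure_singleton_subset hF, mem_iff_cflatClosure_singleton_subset hF, h]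

theorem finite_cflats (hV : V.Finite) : Finite (CFlats V H) :=
  (hV.finite_subsets.subset fun _ hF => hF.1).to_subtype

theorem IsCpx.empty_mem (hcpx : IsCpx V H) : ∅ ∈ H := by
  obtain ⟨X, hX⟩ := hcpx.2.2.1
  exact hcpx.2.2.2.2 X hX ∅ (empty_subset X)

theorem IsCpx.singleton_mem (hcpx : IsCpx V H) {p : α} (hpV : p ∈ V) (hp : p ∉ cflatBot V H) :
    {p} ∈ H := by
  simpa using isCFlat_cflatBot.2 ∅ hcpx.empty_mem (empty_subset _) p ⟨hpV, hp⟩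

theorem IsCpx.pair_mem_of_notMem_cflatClosure (hcpx : IsCpx V H) {p q : α} (hpV : p ∈ V)
    (hp : p ∉ cflatBot V H) (hqV : q ∈ V) (hq : q ∉ cflatClosure V H {p}) : {q, p} ∈ H :=
  (isCFlat_cflatClosure (singleton_subset_iff.2 hpV)).2 {p} (hcpx.singleton_mem hpV hp)
    (subset_cflatClosure {p}) q ⟨hqV, hq⟩

theorem IsCpx.pair_mem (hcpx : IsCpx V H) {p q : α} (hpV : p ∈ V) (hp : p ∉ cflatBot V H)
    (hqV : q ∈ V) (hq : q ∉ cflatBot V H)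
    (hpq : cflatClosure V H {p} ≠ cflatClosure V H {q}) : {p, q} ∈ H := by
  by_cases hqp : q ∈ cflatClosure V H {p}
  · refine hcpx.pair_mem_of_notMem_cflatClosure hqV hq hpV fun hpq' => hpq ?_
    have hpF : IsCFlat V H (cflatClosure V H {p}) :=
      isCFlat_cflatClosure (singleton_subset_iff.2 hpV)
    have hqF : IsCFlat V H (cflatClosure V H {q}) :=
      isCFlat_cflatClosure (singleton_subset_iff.2 hqV)
    exact ((mem_iff_cflatClosure_singleton_subset hqF).1 hpq').antisymm
      ((mem_iff_cflatClosure_singleton_subset hpF).1 hqp)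
  · rw [pair_comm]
    exact hcpx.pair_mem_of_notMem_cflatClosure hpV hp hqV hqp

theorem TransvSD.notMem_cflatBot {X : Set α} (hX : TransvSD V H X) {u : α} (hu : u ∈ X) :
    u ∉ cflatBot V H := by
  obtain ⟨k, F, x, hF, -, -, rfl, hx⟩ := hX
  obtain ⟨i, rfl⟩ := hu
  exact fun h => (hx i).2 (cflatBot_subset (hF _) h)

theorem TransvSD.injOn_cflatClosure {X : Set α} (hX : TransvSD V H X) :
    InjOn (fun u => cflatClosure V H {u}) X := by
  obtain ⟨k, F, x, hF, hFm, -, rfl, hx⟩ := hX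
  have key (i j) (hij : i < j) : cflatClosure V H {x i} ≠ cflatClosure V H {x j} := fun h =>
    (hx j).2 <| (mem_iff_of_cflatClosure_eq (hF _) h).1 <|
      hFm.monotone (Fin.succ_le_castSucc_iff.2 hij) (hx i).1
  rintro _ ⟨i, rfl⟩ _ ⟨j, rfl⟩ h
  rcases lt_trichotomy i j with hij | rfl | hij
  · exact absurd h (key i j hij)
  · rfl
  · exact absurd h.symm (key j i hij)

section BoolRep

variable (hcpx : IsCpx V H) (hbr : BoolRep V H)
include hcpx hbr

theorem isCFlat_cflatBot_union_setOf_cflatClosure_eq (q : α) :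
    IsCFlat V H (cflatBot V H ∪ {r ∈ V | cflatClosure V H {r} = cflatClosure V H {q}}) := by
  refine ⟨union_subset isCFlat_cflatBot.1 (sep_subset _ _), fun I hI hIC p hp => ?_⟩
  have hpB : p ∉ cflatBot V H := fun h => hp.2 (Or.inl h)
  have hpq : cflatClosure V H {p} ≠ cflatClosure V H {q} := fun h => hp.2 (Or.inr ⟨hp.1, h⟩)
  have hIq (u) (hu : u ∈ I) :
      u ∈ V ∧ u ∉ cflatBot V H ∧ cflatClosure V H {u} = cflatClosure V H {q} := by
    have hu' := (hbr I hI).notMem_cflatBot hu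
    obtain ⟨huV, huq⟩ := (hIC hu).resolve_left hu'
    exact ⟨huV, hu', huq⟩
  rcases I.eq_empty_or_nonempty with rfl | ⟨u, hu⟩
  · simpa using hcpx.singleton_mem hp.1 hpB
  have hI : I = {u} := eq_singleton_iff_unique_mem.2 ⟨hu, fun v hv =>
    (hbr I hI).injOn_cflatClosure hv hu ((hIq v hv).2.2.trans (hIq u hu).2.2.symm)⟩
  subst hI
  obtain ⟨huV, huB, huq⟩ := hIq u rfl
  rw [pair_comm]
  exact hcpx.pair_mem huV huB hp.1 hpB (huq.trans_ne hpq.symm)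

theorem isAtom_cflatClosure_singleton {q : α} (hqV : q ∈ V) (hq : q ∉ cflatBot V H) :
    IsAtom (⟨cflatClosure V H {q}, isCFlat_cflatClosure (singleton_subset_iff.2 hqV)⟩ :
      CFlats V H) := by
  refine ⟨fun h => hq ?_, ?_⟩
  · have h' : cflatClosure V H {q} = cflatBot V H := congrArg Subtype.val h
    exact h' ▸ mem_cflatClosure_singleton q
  · rintro ⟨D, hD⟩ hDq
    by_contra hne
    obtain ⟨r, hrD, hrB⟩ : ∃ r ∈ D, r ∉ cflatBot V H := by
      by_contra! h
      exact hne (Subtype.ext (Subset.antisymm h (cflatBot_subset hD)))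
    have hrq : cflatClosure V H {r} = cflatClosure V H {q} := by
      have hC := isCFlat_cflatBot_union_setOf_cflatClosure_eq hcpx hbr q
      have hqC := (mem_iff_cflatClosure_singleton_subset hC).1 (Or.inr ⟨hqV, rfl⟩)
      exact ((hqC (hDq.le hrD)).resolve_left hrB).2
    exact hDq.not_ge ((mem_iff_cflatClosure_singleton_subset hD).1
      ((mem_iff_of_cflatClosure_eq hD hrq).1 hrD))

end BoolRep

def succDiff {n : ℕ} (G : Fin (n + 1) → Set α) (i : Fin n) : Set α := G i.succ \ G i.castSucc

section Chain

variable {n : ℕ} {G : Fin (n + 1) → Set α}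

theorem eq_of_mem_succDiff (hG : Monotone G) {p : α} {i j : Fin n}
    (hi : p ∈ succDiff G i) (hj : p ∈ succDiff G j) : i = j := by
  rcases lt_trichotomy i j with hij | hij | hij
  · exact absurd (hG (Fin.succ_le_castSucc_iff.2 hij) hi.1) hj.2
  · exact hij
  · exact absurd (hG (Fin.succ_le_castSucc_iff.2 hij) hj.1) hi.2

theorem mem_succDiff_iff_of_cflatClosure_eq (hGF : ∀ i, IsCFlat V H (G i)) {p q : α}
    (h : cflatClosure V H {p} = cflatClosure V H {q}) (i : Fin n) :
    p ∈ succDiff G i ↔ q ∈ succDiff G i := by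
  simp only [succDiff, mem_sdiff, mem_iff_of_cflatClosure_eq (hGF _) h]

theorem mem_of_subsingleton_inter_succDiff (h0 : ∅ ∈ H) (hGF : ∀ i, IsCFlat V H (G i))
    (hG : Monotone G) {Y : Set α} (hY : ∀ y ∈ Y, ∃ i, y ∈ succDiff G i)
    (hYi : ∀ i, (Y ∩ succDiff G i).Subsingleton) : Y ∈ H := by
  have hstep : ∀ i : Fin (n + 1), Y ∩ G i ∈ H := by
    refine Fin.induction ?_ fun i hi => ?_
    · convert h0
      refine eq_empty_of_forall_notMem fun y hy => ?_
      obtain ⟨j, hj⟩ := hY y hy.1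
      exact hj.2 (hG (Fin.zero_le _) hy.2)
    · have hsplit : Y ∩ G i.succ = Y ∩ G i.castSucc ∪ Y ∩ succDiff G i := by
        rw [succDiff, ← inter_union_distrib_left,
          union_sdiff_cancel (hG (Fin.castSucc_le_succ i))]
      rcases (hYi i).eq_empty_or_singleton with h | ⟨y, h⟩
      · rwa [hsplit, h, union_empty]
      · have hy : y ∈ Y ∩ succDiff G i := h ▸ rfl
        rw [hsplit, h, union_singleton]
        exact (hGF _).2 _ hi inter_subset_right y ⟨(hGF _).1 hy.2.1, hy.2.2⟩
  simpa [inter_eq_left.2 fun y hy => (hY y hy).elim fun j hj => hG (Fin.le_last _) hj.1]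
    using hstep (Fin.last n)

theorem notMem_cflatBot_of_mem_succDiff (hGF : ∀ i, IsCFlat V H (G i)) {p : α} {i : Fin n}
    (hp : p ∈ succDiff G i) : p ∉ cflatBot V H :=
  fun h => hp.2 (cflatBot_subset (hGF _) h)

variable (hGF : ∀ i, IsCFlat V H (G i)) (hG : Monotone G)
  {x : Fin n → α} (hx : ∀ i, x i ∈ succDiff G i)
include hGF hG hx

theorem injective_cflatClosure_singleton : Injective fun i => cflatClosure V H {x i} :=
  fun i j h => eq_of_mem_succDiff hG (hx i) ((mem_succDiff_iff_of_cflatClosure_eq hGF h j).2 (hx j))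

variable (hcpx : IsCpx V H) (hbr : BoolRep V H)
include hcpx hbr

variable (hat : Nat.card {A : CFlats V H | IsAtom A} ≤ n)
include hat

theorem exists_cflatClosure_singleton_eq {q : α} (hqV : q ∈ V) (hq : q ∉ cflatBot V H) :
    ∃ i, cflatClosure V H {q} = cflatClosure V H {x i} := by
  have := finite_cflats (H := H) hcpx.1
  let atomOf : Fin n → {A : CFlats V H | IsAtom A} := fun i =>
    ⟨_, isAtom_cflatClosure_singleton hcpx hbr ((hGF _).1 (hx i).1)
      (notMem_cflatBot_of_mem_succDiff hGF (hx i))⟩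
  have hsurj : Surjective atomOf := (Injective.bijective_of_nat_card_le
    (fun i j h => injective_cflatClosure_singleton hGF hG hx (congrArg (·.1.1) h))
    (by simpa using hat)).2
  obtain ⟨i, hi⟩ := hsurj ⟨_, isAtom_cflatClosure_singleton hcpx hbr hqV hq⟩
  exact ⟨i, congrArg (·.1.1) hi.symm⟩

theorem mem_of_injOn_cflatClosure {Y : Set α} (hYV : Y ⊆ V) (hYB : Disjoint Y (cflatBot V H))
    (hY : InjOn (fun y => cflatClosure V H {y}) Y) : Y ∈ H := by
  have hrep : ∀ y ∈ Y, ∃ i, cflatClosure V H {y} = cflatClosure V H {x i} := fun y hy =>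
    exists_cflatClosure_singleton_eq hGF hG hx hcpx hbr hat (hYV hy) (hYB.notMem_of_mem_left hy)
  refine mem_of_subsingleton_inter_succDiff hcpx.empty_mem hGF hG (fun y hy => ?_) fun i => ?_
  · obtain ⟨i, hi⟩ := hrep y hy
    exact ⟨i, (mem_succDiff_iff_of_cflatClosure_eq hGF hi i).2 (hx i)⟩
  · rintro y ⟨hy, hyi⟩ z ⟨hz, hzi⟩
    have hcl (w) (hw : w ∈ Y) (hwi : w ∈ succDiff G i) :
        cflatClosure V H {w} = cflatClosure V H {x i} := by
      obtain ⟨j, hj⟩ := hrep w hw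
      rwa [eq_of_mem_succDiff hG ((mem_succDiff_iff_of_cflatClosure_eq hGF hj i).1 hwi) (hx j)]
    exact hY hy hz ((hcl y hy hyi).trans (hcl z hz hzi).symm)

theorem isCFlat_of_saturated {F : Set α} (hFV : F ⊆ V) (hBF : cflatBot V H ⊆ F)
    (hF : ∀ p ∈ F, ∀ q ∈ V, cflatClosure V H {q} = cflatClosure V H {p} → q ∈ F) :
    IsCFlat V H F := by
  refine ⟨hFV, fun I hI hIF p hp => ?_⟩
  have hpI : p ∉ I := fun h => hp.2 (hIF h)
  refine mem_of_injOn_cflatClosure hGF hG hx hcpx hbr hat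
    (insert_subset hp.1 (hcpx.2.2.2.1 I hI)) ?_ ?_
  · refine disjoint_insert_left.2 ⟨fun h => hp.2 (hBF h), ?_⟩
    exact disjoint_left.2 fun u hu => (hbr I hI).notMem_cflatBot hu
  · refine (injOn_insert hpI).2 ⟨(hbr I hI).injOn_cflatClosure, ?_⟩
    rintro ⟨u, hu, hup⟩
    exact hp.2 (hF u (hIF hu) p hp.1 hup.symm)

theorem nonempty_orderIso_cflats_set_fin : Nonempty (CFlats V H ≃o Set (Fin n)) := by
  let Z : Set (Fin n) → Set α := fun T =>
    {q ∈ V | ∀ i, cflatClosure V H {q} = cflatClosure V H {x i} → i ∈ T}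
  have hZ : ∀ T, IsCFlat V H (Z T) := fun T => by
    refine isCFlat_of_saturated hGF hG hx hcpx hbr hat (sep_subset _ _) (fun q hq => ?_) ?_
    · refine ⟨isCFlat_cflatBot.1 hq, fun i hi => ?_⟩
      exact absurd ((mem_iff_of_cflatClosure_eq isCFlat_cflatBot hi).1 hq)
        (notMem_cflatBot_of_mem_succDiff hGF (hx i))
    · rintro p ⟨-, hp⟩ q hqV hqp
      exact ⟨hqV, fun i hi => hp i (hqp.symm.trans hi)⟩
  have hxZ : ∀ T, x ⁻¹' Z T = T := fun T => by
    ext i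
    refine ⟨fun hi => hi.2 i rfl, fun hi => ⟨(hGF _).1 (hx i).1, fun j hij => ?_⟩⟩
    rwa [← injective_cflatClosure_singleton hGF hG hx hij]
  refine ⟨OrderIso.ofSurjective (OrderEmbedding.ofMapLEIff (fun F => x ⁻¹' F.1) ?_)
    fun T => ⟨⟨Z T, hZ T⟩, hxZ T⟩⟩
  refine fun F F' => ⟨fun h p hp => ?_, fun h => preimage_mono h⟩
  by_cases hpB : p ∈ cflatBot V H
  · exact cflatBot_subset F'.2 hpB
  obtain ⟨i, hi⟩ := exists_cflatClosure_singleton_eq hGF hG hx hcpx hbr hat (F.2.1 hp) hpB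
  exact (mem_iff_of_cflatClosure_eq F'.2 hi).2 (h ((mem_iff_of_cflatClosure_eq F.2 hi).1 hp))

end Chain

section Powerset

variable {A : Set α} {b : α}

theorem isCFlat_insert_powerset_iff (hb : b ∉ A) {F : Set α} :
    IsCFlat (insert b A) (𝒫 A) F ↔ F ⊆ insert b A ∧ b ∈ F := by
  refine ⟨fun hF => ⟨hF.1, by_contra fun hbF => hb ?_⟩, fun hF => ⟨hF.1, ?_⟩⟩
  · exact hF.2 ∅ (empty_subset A) (empty_subset F) b ⟨mem_insert b A, hbF⟩ (mem_insert b ∅)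
  · exact fun I hI _ p hp => insert_subset (hp.1.resolve_left fun h => hp.2 (h ▸ hF.2)) hI

theorem isCpx_insert_powerset (hA : A.Finite) : IsCpx (insert b A) (𝒫 A) :=
  ⟨hA.insert b, insert_nonempty b A, ⟨∅, empty_subset A⟩,
    fun _ hX => hX.trans (subset_insert b A), fun _ hX _ hYX => hYX.trans hX⟩

theorem boolRep_insert_powerset (hA : A.Finite) (hb : b ∉ A) : BoolRep (insert b A) (𝒫 A) := by
  intro X hX
  have : Finite X := (hA.subset hX).to_subtype
  let x : Fin (Nat.card X) → α := Subtype.val ∘ (Finite.equivFin X).symm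
  have hx : Injective x := Subtype.val_injective.comp (Finite.equivFin X).symm.injective
  let F : Fin (Nat.card X + 1) → Set α := fun i => insert b (x '' {j | j.castSucc < i})
  have hxF : ∀ j i, x j ∈ F i ↔ j.castSucc < i := fun j i => by
    have hxb : x j ≠ b := fun h => hb (h ▸ hX ((Finite.equivFin X).symm j).2)
    simp only [F, mem_insert_iff, hxb, false_or]
    exact hx.mem_set_image
  refine ⟨_, F, x, fun i => (isCFlat_insert_powerset_iff hb).2 ⟨?_, mem_insert b _⟩, ?_, hx,
    ?_, fun i => ⟨(hxF i _).2 i.castSucc_lt_succ, fun h => ((hxF i _).1 h).false⟩⟩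
  · exact insert_subset_insert (image_subset_iff.2 fun j _ => hX ((Finite.equivFin X).symm j).2)
  · refine Fin.strictMono_iff_lt_succ.2 fun i => (ssubset_iff_of_subset ?_).2
      ⟨x i, (hxF i _).2 i.castSucc_lt_succ, fun h => ((hxF i _).1 h).false⟩
    exact insert_subset_insert (image_mono fun j hj => hj.trans i.castSucc_lt_succ)
  · rw [eq_comm, range_comp, (Finite.equivFin X).symm.surjective.range_eq, image_univ,
      Subtype.range_coe]

noncomputable def orderIsoCFlatsInsertPowerset (hb : b ∉ A) :
    Set A ≃o CFlats (insert b A) (𝒫 A) :=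
  OrderIso.ofSurjective
    (OrderEmbedding.ofMapLEIff
      (fun s => ⟨insert b (Subtype.val '' s), (isCFlat_insert_powerset_iff hb).2
        ⟨insert_subset_insert (Subtype.coe_image_subset A s), mem_insert b _⟩⟩)
      fun s t => by
        have hbs : b ∉ Subtype.val '' s := by
          rintro ⟨a, -, ha⟩
          exact hb (ha ▸ a.2)
        exact (insert_subset_insert_iff hbs).trans (image_subset_image_iff Subtype.val_injective))
    fun F => ⟨Subtype.val ⁻¹' F.1, Subtype.ext <| by
      obtain ⟨hFA, hbF⟩ := (isCFlat_insert_powerset_iff hb).1 F.2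
      change insert b (Subtype.val '' (Subtype.val ⁻¹' F.1)) = F.1
      rw [Subtype.image_preimage_coe, insert_inter_distrib, insert_eq_of_mem hbF,
        inter_eq_right.2 hFA]⟩

end Powerset

/-- If `L` is a finite lattice whose height equals its number of atoms, then `L`
is isomorphic to the lattice of flats of some boolean representable finite
simplicial complex iff `L` is isomorphic to the powerset lattice `(2^{At(L)}, ⊆)`. -/
theorem stmt15 (L : Type u) [Lattice L] [Fintype L] [OrderBot L]
    (hh : hasHeight L (Nat.card {a : L | IsAtom a})) :
    (∃ (α : Type u) (V : Set α) (H : Set (Set α)), IsCpx V H ∧ BoolRep V H ∧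
        Nonempty (L ≃o {F : Set α // IsCFlat V H F})) ↔
    Nonempty (L ≃o Set {a : L | IsAtom a}) := by
  constructor
  · rintro ⟨α, V, H, hcpx, hbr, ⟨e⟩⟩
    obtain ⟨c, hc⟩ := hh.1
    let G : Fin (Nat.card {a : L | IsAtom a} + 1) → Set α := fun i => (e (c i)).1
    have hG : StrictMono G := (Subtype.strictMono_coe _).comp (e.strictMono.comp hc)
    choose x hx using fun i : Fin _ => exists_of_ssubset (hG i.castSucc_lt_succ)
    have hat : Nat.card {A : CFlats V H | IsAtom A} ≤ Nat.card {a : L | IsAtom a} :=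
      (Nat.card_congr (e.toEquiv.subtypeEquiv fun a => (e.isAtom_iff a).symm)).ge
    obtain ⟨φ⟩ :=
      nonempty_orderIso_cflats_set_fin (fun i => (e (c i)).2) hG.monotone hx hcpx hbr hat
    exact ⟨e.trans (φ.trans (Finite.equivFin _).symm.toOrderIsoSet)⟩
  · rintro ⟨e⟩
    have hbot : (⊥ : L) ∉ {a : L | IsAtom a} := fun h => h.1 rfl
    exact ⟨L, _, _, isCpx_insert_powerset (toFinite _), boolRep_insert_powerset (toFinite _) hbot,
      ⟨e.trans (orderIsoCFlatsInsertPowerset hbot)⟩⟩
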